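/- arXiv:2107.08913 — 2 statements merged into one kernel-verified Lean document; each statement's English description precedes it below -/
import Mathlib

section
/- There exists a Schwartz function g on ℝ such that supp g ⊆ [1, ∞), ∫_ℝ g = 1, and ∫_ℝ t^k g(t) dt = 0 for every positive integer k. -/
/-!
Take a bump `φ` supported in `[1, ∞)` with `∫ φ = 1` and put
`g x = ∑ⱼ aⱼ 2⁻ʲ φ (2⁻ʲ x)`. Dilating by `2ʲ` multiplies the `k`-th moment by `2ʲᵏ`, so the
`k`-th moment of `g` is `P (2ᵏ) * ∫ uᵏ φ u` with `P z = ∑ⱼ aⱼ zʲ`. Take for `P` Euler's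
product `∏_{i ≥ 1} (1 - z / 2ⁱ)`, whose coefficients are `aⱼ = (-1)ʲ / ∏_{i=1}^{j} (2ⁱ - 1)`:
the functional equation `P (2 z) = (1 - z) P z` makes `P` vanish at `2ᵏ` for every `k ≥ 1`,
while `P 1 > 0` by the alternating series test. Since `|aⱼ| ≤ 1 / j!`, the series for `g`
converges with all its weighted derivatives, so `g / P 1` is the required Schwartz function.
-/

open MeasureTheory Finset SchwartzMap
open scoped ContDiff

namespace VanishingMoments

noncomputable def eulerCoeff (j : ℕ) : ℝ := ∏ i ∈ range j, (2 ^ (i + 1) - 1 : ℝ)⁻¹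

noncomputable def eulerSeries (z : ℝ) : ℝ := ∑' j, (-1) ^ j * eulerCoeff j * z ^ j

lemma eulerCoeff_zero : eulerCoeff 0 = 1 := prod_range_zero _

lemma one_le_two_pow_succ_sub_one (i : ℕ) : (1 : ℝ) ≤ 2 ^ (i + 1) - 1 := by
  have : (2 : ℝ) ≤ 2 ^ (i + 1) := le_self_pow₀ one_le_two (Nat.succ_ne_zero i)
  linarith

lemma eulerCoeff_succ (j : ℕ) : eulerCoeff (j + 1) = eulerCoeff j / (2 ^ (j + 1) - 1) := by
  rw [eulerCoeff, prod_range_succ, ← div_eq_mul_inv, eulerCoeff]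

lemma two_pow_succ_sub_one_pos (i : ℕ) : (0 : ℝ) < 2 ^ (i + 1) - 1 :=
  zero_lt_one.trans_le (one_le_two_pow_succ_sub_one i)

lemma eulerCoeff_pos (j : ℕ) : 0 < eulerCoeff j :=
  prod_pos fun i _ => inv_pos.2 (two_pow_succ_sub_one_pos i)

lemma eulerCoeff_antitone : Antitone eulerCoeff :=
  antitone_nat_of_succ_le fun j => by
    rw [eulerCoeff_succ]
    exact div_le_self (eulerCoeff_pos j).le (one_le_two_pow_succ_sub_one j)

lemma eulerCoeff_le_inv_factorial (j : ℕ) : eulerCoeff j ≤ (j.factorial : ℝ)⁻¹ := by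
  rw [← prod_range_add_one_eq_factorial, Nat.cast_prod, ← prod_inv_distrib]
  refine prod_le_prod (fun i _ => (inv_pos.2 (two_pow_succ_sub_one_pos i)).le) fun i _ => ?_
  have : ((i + 2 : ℕ) : ℝ) ≤ 2 ^ (i + 1) := by exact_mod_cast Nat.lt_two_pow_self
  push_cast at this ⊢
  exact inv_anti₀ (by positivity) (by linarith)

lemma eulerCoeff_succ_mul_two_pow (j : ℕ) :
    eulerCoeff (j + 1) * 2 ^ (j + 1) = eulerCoeff (j + 1) + eulerCoeff j := by
  have h := (two_pow_succ_sub_one_pos j).ne'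
  rw [eulerCoeff_succ]
  field_simp
  ring

lemma summable_eulerCoeff_mul_pow {r : ℝ} (hr : 0 ≤ r) :
    Summable fun j => eulerCoeff j * r ^ j :=
  (Real.summable_pow_div_factorial r).of_nonneg_of_le
    (fun j => mul_nonneg (eulerCoeff_pos j).le (pow_nonneg hr j))
    fun j => by
      rw [div_eq_inv_mul]
      exact mul_le_mul_of_nonneg_right (eulerCoeff_le_inv_factorial j) (pow_nonneg hr j)

lemma summable_eulerTerm (z : ℝ) : Summable fun j => (-1) ^ j * eulerCoeff j * z ^ j :=
  .of_norm_bounded (summable_eulerCoeff_mul_pow (abs_nonneg z)) fun j => by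
    simp [abs_of_pos (eulerCoeff_pos j)]

lemma eulerSeries_two_mul (z : ℝ) : eulerSeries (2 * z) = (1 - z) * eulerSeries z := by
  have hz := summable_eulerTerm z
  have hshift := (summable_nat_add_iff 1).2 hz
  have hterm (j : ℕ) : (-1) ^ (j + 1) * eulerCoeff (j + 1) * (2 * z) ^ (j + 1) =
      (-1) ^ (j + 1) * eulerCoeff (j + 1) * z ^ (j + 1) -
        z * ((-1) ^ j * eulerCoeff j * z ^ j) := by
    rw [mul_pow, ← mul_assoc, mul_assoc _ (eulerCoeff _), eulerCoeff_succ_mul_two_pow]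
    ring
  rw [eulerSeries, (summable_eulerTerm (2 * z)).tsum_eq_zero_add, tsum_congr hterm,
    hshift.tsum_sub (hz.mul_left z), tsum_mul_left, eulerSeries, hz.tsum_eq_zero_add,
    eulerCoeff_zero]
  ring

lemma eulerSeries_two_pow_eq_zero {k : ℕ} (hk : 0 < k) : eulerSeries (2 ^ k) = 0 := by
  induction k, hk using Nat.le_induction with
  | base => simpa using eulerSeries_two_mul 1
  | succ k _ ih => rw [pow_succ', eulerSeries_two_mul, ih, mul_zero]

lemma eulerSeries_one_pos : 0 < eulerSeries 1 := by
  have hsum : Summable eulerCoeff := by simpa using summable_eulerCoeff_mul_pow zero_le_one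
  -- the first four terms already sum to `1 - 1 + 1/3 - 1/21 > 0`
  have h := eulerCoeff_antitone.alternating_series_le_tendsto
    hsum.tendsto_alternating_series_tsum 2
  simp only [eulerSeries, one_pow, mul_one]
  refine lt_of_lt_of_le ?_ h
  norm_num [sum_range_succ, eulerCoeff, prod_range_succ]

lemma norm_iteratedFDeriv_const_mul_comp_mul {𝕜 : Type*} [NontriviallyNormedField 𝕜]
    {f : 𝕜 → 𝕜} {n : ℕ} (hf : ContDiff 𝕜 n f) (b c x : 𝕜) :
    ‖iteratedFDeriv 𝕜 n (fun y => b * f (c * y)) x‖ =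
      ‖b‖ * ‖c‖ ^ n * ‖iteratedFDeriv 𝕜 n f (c * x)‖ := by
  simp only [norm_iteratedFDeriv_eq_norm_iteratedDeriv, iteratedDeriv_const_mul_field,
    iteratedDeriv_comp_const_mul hf, norm_mul, norm_pow, mul_assoc]

section Dyadic

variable (a : ℕ → ℝ) (φ : 𝓢(ℝ, ℝ))

noncomputable def dyadicTerm (j : ℕ) (x : ℝ) : ℝ := a j * (2 ^ j)⁻¹ * φ ((2 ^ j)⁻¹ * x)

noncomputable def dyadicSum (x : ℝ) : ℝ := ∑' j, dyadicTerm a φ j x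

lemma contDiff_dyadicTerm (j : ℕ) : ContDiff ℝ ∞ (dyadicTerm a φ j) :=
  contDiff_const.mul ((φ.smooth ⊤).comp (contDiff_const.mul contDiff_id))

lemma norm_pow_mul_norm_iteratedFDeriv_dyadicTerm_le (k n j : ℕ) (x : ℝ) :
    ‖x‖ ^ k * ‖iteratedFDeriv ℝ n (dyadicTerm a φ j) x‖ ≤
      |a j| * (2 ^ k) ^ j * SchwartzMap.seminorm ℝ k n φ := by
  set s : ℝ := (2 ^ j)⁻¹ with hs_def
  have hs : 0 < s := by positivity
  have hs1 : s ≤ 1 := inv_le_one_of_one_le₀ (one_le_pow₀ one_le_two)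
  have hx : ‖x‖ = 2 ^ j * ‖s * x‖ := by
    rw [norm_mul, Real.norm_of_nonneg hs.le, ← mul_assoc, hs_def,
      mul_inv_cancel₀ (by positivity), one_mul]
  have hφ := SchwartzMap.le_seminorm ℝ k n φ (s * x)
  have hterm : dyadicTerm a φ j = fun y => a j * s * φ (s * y) := rfl
  rw [hterm, norm_iteratedFDeriv_const_mul_comp_mul ((φ.smooth ⊤).of_le
    (by exact_mod_cast le_top)), hx, mul_pow, pow_right_comm,
    norm_mul (a j), Real.norm_eq_abs (a j), Real.norm_of_nonneg hs.le]
  calc (2 ^ k) ^ j * ‖s * x‖ ^ k * (|a j| * s * s ^ n * ‖iteratedFDeriv ℝ n φ (s * x)‖)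
      = |a j| * (2 ^ k) ^ j *
          (s ^ (n + 1) * (‖s * x‖ ^ k * ‖iteratedFDeriv ℝ n φ (s * x)‖)) := by
        ring
    _ ≤ |a j| * (2 ^ k) ^ j * SchwartzMap.seminorm ℝ k n φ := by
        gcongr
        exact mul_le_of_le_one_left (by positivity) (pow_le_one₀ hs.le hs1) |>.trans hφ

lemma norm_iteratedFDeriv_dyadicTerm_le (n j : ℕ) (x : ℝ) :
    ‖iteratedFDeriv ℝ n (dyadicTerm a φ j) x‖ ≤
      |a j| * SchwartzMap.seminorm ℝ 0 n φ := by
  simpa using norm_pow_mul_norm_iteratedFDeriv_dyadicTerm_le a φ 0 n j x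

variable {a}

lemma iteratedFDeriv_dyadicSum (ha : Summable fun j => |a j|) (n : ℕ) :
    iteratedFDeriv ℝ n (dyadicSum a φ) =
      fun x => ∑' j, iteratedFDeriv ℝ n (dyadicTerm a φ j) x :=
  iteratedFDeriv_tsum (contDiff_dyadicTerm a φ) (fun _ _ => ha.mul_right _)
    (fun n j x _ => norm_iteratedFDeriv_dyadicTerm_le a φ n j x) le_top

lemma contDiff_dyadicSum (ha : Summable fun j => |a j|) : ContDiff ℝ ∞ (dyadicSum a φ) :=
  contDiff_tsum (contDiff_dyadicTerm a φ) (fun _ _ => ha.mul_right _)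
    (fun n j x _ => norm_iteratedFDeriv_dyadicTerm_le a φ n j x)

lemma norm_pow_mul_norm_iteratedFDeriv_dyadicSum_le
    (ha : ∀ k : ℕ, Summable fun j => |a j| * (2 ^ k : ℝ) ^ j) (k n : ℕ) (x : ℝ) :
    ‖x‖ ^ k * ‖iteratedFDeriv ℝ n (dyadicSum a φ) x‖ ≤
      ∑' j, |a j| * (2 ^ k) ^ j * SchwartzMap.seminorm ℝ k n φ := by
  have ha0 : Summable fun j => |a j| := by simpa using ha 0
  rw [iteratedFDeriv_dyadicSum φ ha0, ← norm_norm x, ← norm_pow, ← norm_smul,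
    ← tsum_const_smul'']
  exact tsum_of_norm_bounded ((ha k).mul_right _).hasSum fun j => by
    simpa only [norm_smul, norm_pow, norm_norm] using
      norm_pow_mul_norm_iteratedFDeriv_dyadicTerm_le a φ k n j x

noncomputable def dyadicSchwartz (ha : ∀ k : ℕ, Summable fun j => |a j| * (2 ^ k : ℝ) ^ j) :
    𝓢(ℝ, ℝ) where
  toFun := dyadicSum a φ
  smooth' := contDiff_dyadicSum φ (by simpa using ha 0)
  decay' k n := ⟨_, norm_pow_mul_norm_iteratedFDeriv_dyadicSum_le φ ha k n⟩

lemma support_dyadicSum_subset (hφ : Function.support φ ⊆ Set.Ici 1) :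
    Function.support (dyadicSum a φ) ⊆ Set.Ici 1 := by
  intro x hx
  obtain ⟨j, hj⟩ : ∃ j, dyadicTerm a φ j x ≠ 0 := by
    by_contra! h
    exact hx (by simp [dyadicSum, h])
  have hsx : (1 : ℝ) ≤ (2 ^ j)⁻¹ * x := hφ (right_ne_zero_of_mul hj)
  have hs : (2 ^ j : ℝ)⁻¹ ≤ 1 := inv_le_one_of_one_le₀ (one_le_pow₀ one_le_two)
  have hs0 : (0 : ℝ) < (2 ^ j)⁻¹ := by positivity
  exact Set.mem_Ici.2 (by nlinarith)

lemma pow_mul_dyadicTerm (k j : ℕ) (t : ℝ) :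
    t ^ k * dyadicTerm a φ j t =
      a j * (2 ^ k) ^ j * ((2 ^ j)⁻¹ * (((2 ^ j)⁻¹ * t) ^ k * φ ((2 ^ j)⁻¹ * t))) := by
  have h : (2 : ℝ) ^ j * (2 ^ j)⁻¹ = 1 := mul_inv_cancel₀ (by positivity)
  have hk : ((2 : ℝ) ^ j) ^ k * ((2 ^ j)⁻¹) ^ k = 1 := by rw [← mul_pow, h, one_pow]
  rw [dyadicTerm, mul_pow, pow_right_comm]
  linear_combination (-(a j * (2 ^ j)⁻¹ * t ^ k * φ ((2 ^ j)⁻¹ * t))) * hk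

lemma integral_smul_comp_mul_of_pos {E : Type*} [NormedAddCommGroup E] [NormedSpace ℝ E]
    (g : ℝ → E) {c : ℝ} (hc : 0 < c) : ∫ t, c • g (c * t) = ∫ u, g u := by
  rw [integral_smul, Measure.integral_comp_mul_left, abs_inv, abs_of_pos hc,
    smul_inv_smul₀ hc.ne']

lemma integrable_pow_mul_schwartzMap (k : ℕ) : Integrable fun u : ℝ => u ^ k * φ u :=
  (integrable_norm_iff (by fun_prop)).1 (by simpa using φ.integrable_pow_mul volume k)

lemma integral_pow_mul_dyadicTerm (k j : ℕ) :
    ∫ t, t ^ k * dyadicTerm a φ j t = a j * (2 ^ k) ^ j * ∫ u, u ^ k * φ u := by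
  have hs : (0 : ℝ) < (2 ^ j)⁻¹ := by positivity
  calc ∫ t, t ^ k * dyadicTerm a φ j t
      = ∫ t, a j * (2 ^ k) ^ j *
          ((2 ^ j : ℝ)⁻¹ • (fun u => u ^ k * φ u) ((2 ^ j)⁻¹ * t)) := by
        simp_rw [pow_mul_dyadicTerm, smul_eq_mul]
    _ = _ := by
        rw [integral_const_mul, integral_smul_comp_mul_of_pos (fun u => u ^ k * φ u) hs]

lemma integral_norm_pow_mul_dyadicTerm (k j : ℕ) :
    ∫ t, ‖t ^ k * dyadicTerm a φ j t‖ = |a j| * (2 ^ k) ^ j * ∫ u, ‖u ^ k * φ u‖ := by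
  have hs : (0 : ℝ) < (2 ^ j)⁻¹ := by positivity
  calc ∫ t, ‖t ^ k * dyadicTerm a φ j t‖
      = ∫ t, |a j| * (2 ^ k) ^ j *
          ((2 ^ j : ℝ)⁻¹ • (fun u => ‖u ^ k * φ u‖) ((2 ^ j)⁻¹ * t)) := by
        simp_rw [pow_mul_dyadicTerm, norm_mul, norm_pow, Real.norm_eq_abs, abs_two,
          abs_of_pos hs, smul_eq_mul]
    _ = _ := by
        rw [integral_const_mul, integral_smul_comp_mul_of_pos (fun u => ‖u ^ k * φ u‖) hs]

lemma integral_pow_mul_dyadicSum (ha : ∀ k : ℕ, Summable fun j => |a j| * (2 ^ k : ℝ) ^ j)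
    (k : ℕ) :
    ∫ t, t ^ k * dyadicSum a φ t = (∑' j, a j * (2 ^ k) ^ j) * ∫ u, u ^ k * φ u := by
  have hint (j : ℕ) : Integrable fun t => t ^ k * dyadicTerm a φ j t := by
    simp_rw [pow_mul_dyadicTerm]
    exact (((integrable_pow_mul_schwartzMap φ k).comp_mul_left' (by positivity)).const_mul
      _).const_mul _
  have hnorm : Summable fun j => ∫ t, ‖t ^ k * dyadicTerm a φ j t‖ := by
    simp_rw [integral_norm_pow_mul_dyadicTerm]
    exact (ha k).mul_right _
  calc ∫ t, t ^ k * dyadicSum a φ t = ∫ t, ∑' j, t ^ k * dyadicTerm a φ j t := by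
        simp_rw [dyadicSum, tsum_mul_left]
    _ = ∑' j, ∫ t, t ^ k * dyadicTerm a φ j t :=
        (integral_tsum_of_summable_integral_norm hint hnorm).symm
    _ = (∑' j, a j * (2 ^ k) ^ j) * ∫ u, u ^ k * φ u := by
        simp_rw [integral_pow_mul_dyadicTerm, tsum_mul_right]

end Dyadic

lemma exists_schwartz_support_subset_Ici_integral_eq_one :
    ∃ φ : 𝓢(ℝ, ℝ), Function.support φ ⊆ Set.Ici 1 ∧ ∫ x, φ x = 1 := by
  let bump : ContDiffBump (2 : ℝ) := ⟨1 / 2, 1, by norm_num, by norm_num⟩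
  refine ⟨bump.hasCompactSupport_normed.toSchwartzMap bump.contDiff_normed, ?_,
    bump.integral_normed⟩
  change Function.support (bump.normed volume) ⊆ _
  rw [bump.support_normed_eq, Real.ball_eq_Ioo]
  exact fun x hx => Set.mem_Ici.2 (by norm_num at hx ⊢; linarith [hx.1])

lemma summable_abs_eulerTerm (k : ℕ) :
    Summable fun j => |(-1) ^ j * eulerCoeff j| * (2 ^ k : ℝ) ^ j := by
  simpa [abs_of_pos (eulerCoeff_pos _)] using
    summable_eulerCoeff_mul_pow (r := 2 ^ k) (by positivity)

end VanishingMoments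

open VanishingMoments in
/-- There exists a Schwartz function `g` on `ℝ` supported in `[1, ∞)` with
`∫ g = 1` and all higher moments `∫ t^k g(t) dt = 0` for `k ≥ 1`. -/
theorem stmt0 :
    ∃ g : SchwartzMap ℝ ℝ,
      tsupport g ⊆ Set.Ici (1 : ℝ) ∧
      (∫ t : ℝ, g t) = 1 ∧
      ∀ k : ℕ, 0 < k → (∫ t : ℝ, t ^ k * g t) = 0 := by
  obtain ⟨φ, hφ_supp, hφ_int⟩ := exists_schwartz_support_subset_Ici_integral_eq_one
  set g := dyadicSchwartz φ summable_abs_eulerTerm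
  set c := (eulerSeries 1)⁻¹
  have hmoment (k : ℕ) :
      ∫ t, t ^ k * (c • g) t = c * (eulerSeries (2 ^ k) * ∫ u, u ^ k * φ u) := by
    simp_rw [smul_apply, smul_eq_mul, mul_left_comm _ c, integral_const_mul]
    exact congrArg (c * ·) (integral_pow_mul_dyadicSum φ summable_abs_eulerTerm k)
  refine ⟨c • g, ?_, ?_, fun k hk => ?_⟩
  · exact closure_minimal ((Function.support_const_smul_subset c _).trans
      (support_dyadicSum_subset φ hφ_supp)) isClosed_Ici
  · simpa [hφ_int, c, eulerSeries_one_pos.ne'] using hmoment 0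
  · rw [hmoment, eulerSeries_two_pow_eq_zero hk, zero_mul, mul_zero]
end

section
/- Let n ≥ 2 be an integer, β ≥ 0, α > -1 with α < β - 1/2, and 0 < δ < 1/2. Then there is a constant C depending only on n, α, β such that ∫_0^1 ∫_0^1 ∫_0^1 s_1^α t^{2n-3} / [(δ + s_1 + s_2 + t²)^{2+β} (δ + s_1 + s_2 + t)^{2n-3}] ds_1 ds_2 dt ≤ C δ^{α - β + 1/2}. -/
open MeasureTheory Set Real

/-!
Bound `t ^ (2n-3) / (δ + s₁ + s₂ + t) ^ (2n-3)` by `1` and integrate out one variable at a time.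
With `a = δ + t² + s₂`, the `s₁`-integral of `s₁ ^ α / (a + s₁) ^ (2+β)` is `O(a ^ (α-β-1))`:
split at `s₁ = a`, using `a + s₁ ≥ a` below and `a + s₁ ≥ s₁` above. The `s₂`-integral of
`(b + s₂) ^ (α-β-1)` is `O(b ^ (α-β))` with `b = δ + t²`. Finally `∫₀¹ (δ + t²) ^ (α-β) dt` is
`O(δ ^ (α-β+1/2))`, splitting at `t = √δ`; the tail `t ^ (2(α-β))` is integrable at infinity
exactly because `α < β - 1/2`.
-/

theorem setIntegral_Ioc_zero_le_of_le_rpow {f : ℝ → ℝ} {p m c : ℝ} (hp : -1 < p) (hm : 0 ≤ m)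
    (hf : IntegrableOn f (Ioc 0 m)) (hfc : ∀ s ∈ Ioc 0 m, f s ≤ c * s ^ p) :
    ∫ s in Ioc 0 m, f s ≤ c * (m ^ (p + 1) / (p + 1)) := by
  have hpow : IntegrableOn (fun s : ℝ => c * s ^ p) (Ioc 0 m) :=
    ((intervalIntegral.intervalIntegrable_rpow' hp).1).const_mul c
  calc ∫ s in Ioc 0 m, f s ≤ ∫ s in Ioc 0 m, c * s ^ p :=
        setIntegral_mono_on hf hpow measurableSet_Ioc hfc
    _ = c * (m ^ (p + 1) / (p + 1)) := by
      rw [integral_const_mul, ← intervalIntegral.integral_of_le hm, integral_rpow (.inl hp),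
        zero_rpow (by linarith), sub_zero]

theorem setIntegral_Ioo_le_of_le_rpow {f : ℝ → ℝ} {q m b c : ℝ} (hq : q < -1) (hm : 0 < m)
    (hc : 0 ≤ c) (hf : IntegrableOn f (Ioo m b)) (hfc : ∀ s ∈ Ioo m b, f s ≤ c * s ^ q) :
    ∫ s in Ioo m b, f s ≤ c * (m ^ (q + 1) / -(q + 1)) := by
  have hpow : IntegrableOn (fun s : ℝ => c * s ^ q) (Ioi m) :=
    (integrableOn_Ioi_rpow_of_lt hq hm).const_mul c
  calc ∫ s in Ioo m b, f s ≤ ∫ s in Ioo m b, c * s ^ q :=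
        setIntegral_mono_on hf (hpow.mono_set Ioo_subset_Ioi_self) measurableSet_Ioo hfc
    _ ≤ ∫ s in Ioi m, c * s ^ q := by
      refine setIntegral_mono_set hpow ?_ Ioo_subset_Ioi_self.eventuallyLE
      filter_upwards [self_mem_ae_restrict measurableSet_Ioi] with s hs
      exact mul_nonneg hc (rpow_nonneg (hm.trans hs).le _)
    _ = c * (m ^ (q + 1) / -(q + 1)) := by
      rw [integral_const_mul, integral_Ioi_rpow_of_lt hq hm, neg_div, div_neg]

theorem setIntegral_Ioo_zero_one_le_of_le_rpow {f : ℝ → ℝ} {p q m c c' : ℝ} (hp : -1 < p)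
    (hq : q < -1) (hm : 0 < m) (hm1 : m < 1) (hc' : 0 ≤ c') (hf : IntegrableOn f (Ioo 0 1))
    (hsmall : ∀ s ∈ Ioc 0 m, f s ≤ c * s ^ p) (hlarge : ∀ s ∈ Ioo m 1, f s ≤ c' * s ^ q) :
    ∫ s in Ioo 0 1, f s ≤ c * (m ^ (p + 1) / (p + 1)) + c' * (m ^ (q + 1) / -(q + 1)) := by
  rw [← Ioc_union_Ioo_eq_Ioo hm.le hm1, setIntegral_union
    (Ioc_disjoint_Ioi_same.mono_right Ioo_subset_Ioi_self) measurableSet_Ioo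
    (hf.mono_set (Ioc_subset_Ioo_right hm1)) (hf.mono_set (Ioo_subset_Ioo_left hm.le))]
  exact add_le_add
    (setIntegral_Ioc_zero_le_of_le_rpow hp hm.le (hf.mono_set (Ioc_subset_Ioo_right hm1)) hsmall)
    (setIntegral_Ioo_le_of_le_rpow hq hm hc' (hf.mono_set (Ioo_subset_Ioo_left hm.le)) hlarge)

theorem integrableOn_rpow_div_add_rpow {α γ a : ℝ} (hα : -1 < α) (ha : 0 < a) :
    IntegrableOn (fun s : ℝ => s ^ α / (a + s) ^ γ) (Ioo 0 1) := by
  have hcont : ContinuousOn (fun s : ℝ => ((a + s) ^ γ)⁻¹) (uIcc 0 1) := by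
    rw [uIcc_of_le zero_le_one]
    refine ((continuousOn_const.add continuousOn_id).rpow_const fun s hs => .inl ?_).inv₀
      fun s hs => ?_ <;>
    · have := hs.1
      dsimp
      positivity
  have h := (intervalIntegral.intervalIntegrable_rpow' (a := 0) (b := 1) hα).mul_continuousOn hcont
  rw [intervalIntegrable_iff_integrableOn_Ioo_of_le zero_le_one] at h
  simpa only [div_eq_mul_inv] using h

theorem integral_rpow_div_add_rpow_le {α γ a : ℝ} (hα : -1 < α) (hαγ : α + 1 < γ) (ha : 0 < a) :
    ∫ s in Ioo 0 1, s ^ α / (a + s) ^ γ ≤ (1 / (α + 1) + 1 / (γ - α - 1)) * a ^ (α + 1 - γ) := by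
  have hα1 : 0 < α + 1 := by linarith
  have hγα : 0 < γ - α - 1 := by linarith
  have hint := integrableOn_rpow_div_add_rpow (γ := γ) hα ha
  have hsmall : ∀ s ∈ Ioi (0 : ℝ), s ^ α / (a + s) ^ γ ≤ a ^ (-γ) * s ^ α := fun s hs => by
    have hs0 : 0 < s := hs
    rw [rpow_neg ha.le, inv_mul_eq_div]
    gcongr
    · linarith
    · linarith
  rcases le_or_gt 1 a with h1a | ha1
  · calc ∫ s in Ioo 0 1, s ^ α / (a + s) ^ γ
        ≤ a ^ (-γ) * (1 ^ (α + 1) / (α + 1)) := by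
          rw [← integral_Ioc_eq_integral_Ioo]
          exact setIntegral_Ioc_zero_le_of_le_rpow hα zero_le_one
            (by rwa [integrableOn_Ioc_iff_integrableOn_Ioo]) fun s hs => hsmall s hs.1
      _ ≤ (1 / (α + 1) + 1 / (γ - α - 1)) * a ^ (α + 1 - γ) := by
          rw [one_rpow, mul_one_div, div_eq_mul_one_div, mul_comm]
          gcongr
          · linarith [one_div_pos.2 hγα]
          · linarith
  · have hlarge : ∀ s ∈ Ioo a 1, s ^ α / (a + s) ^ γ ≤ 1 * s ^ (α - γ) := fun s hs => by
      have hs0 : 0 < s := ha.trans hs.1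
      rw [one_mul, rpow_sub hs0]
      gcongr
      · linarith
      · linarith
    have hpow : a ^ (-γ) * a ^ (α + 1) = a ^ (α + 1 - γ) := by
      rw [← rpow_add ha, neg_add_eq_sub]
    calc ∫ s in Ioo 0 1, s ^ α / (a + s) ^ γ
        ≤ a ^ (-γ) * (a ^ (α + 1) / (α + 1)) + 1 * (a ^ (α - γ + 1) / -(α - γ + 1)) :=
          setIntegral_Ioo_zero_one_le_of_le_rpow hα (by linarith) ha ha1 zero_le_one hint
            (fun s hs => hsmall s hs.1) hlarge
      _ = (1 / (α + 1) + 1 / (γ - α - 1)) * a ^ (α + 1 - γ) := by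
          rw [← mul_div_assoc, hpow, sub_add_eq_add_sub, neg_sub]
          ring

theorem integral_add_rpow_le {γ b : ℝ} (hγ : γ < 0) (hb : 0 < b) :
    ∫ s in Ioo 0 1, (b + s) ^ (γ - 1) ≤ b ^ γ / -γ := by
  have h0 : (0 : ℝ) ∉ uIcc (b + 0) (b + 1) := by
    rw [uIcc_of_le (by linarith)]
    exact fun h => by linarith [h.1]
  rw [← integral_Ioc_eq_integral_Ioo, ← intervalIntegral.integral_of_le zero_le_one,
    intervalIntegral.integral_comp_add_left (· ^ (γ - 1)),
    integral_rpow (.inr ⟨by linarith, h0⟩), sub_add_cancel, add_zero, sub_div, div_neg]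
  have : (b + 1) ^ γ / γ ≤ 0 := div_nonpos_of_nonneg_of_nonpos (by positivity) hγ.le
  linarith

theorem integral_add_sq_rpow_le {γ δ : ℝ} (hγ : γ < -1 / 2) (hδ : 0 < δ) (hδ1 : δ < 1) :
    ∫ t in Ioo 0 1, (δ + t ^ 2) ^ γ ≤ (1 + 1 / (-2 * γ - 1)) * δ ^ (γ + 1 / 2) := by
  have hint : IntegrableOn (fun t : ℝ => (δ + t ^ 2) ^ γ) (Ioo 0 1) :=
    ((continuous_const.add (continuous_pow 2)).rpow_const fun t => .inl (add_pos_of_pos_of_nonneg hδ (sq_nonneg t)).ne')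
      |>.integrableOn_Icc.mono_set Ioo_subset_Icc_self
  have hsqrt : ∀ r : ℝ, √δ ^ r = δ ^ (r / 2) := fun r => by
    rw [sqrt_eq_rpow, ← rpow_mul hδ.le, one_div_mul_eq_div]
  calc ∫ t in Ioo 0 1, (δ + t ^ 2) ^ γ
      ≤ δ ^ γ * (√δ ^ ((0 : ℝ) + 1) / (0 + 1)) + 1 * (√δ ^ (2 * γ + 1) / -(2 * γ + 1)) := by
        refine setIntegral_Ioo_zero_one_le_of_le_rpow (by norm_num) (by linarith)
          (sqrt_pos.2 hδ) (by simpa using sqrt_lt_sqrt hδ.le hδ1) zero_le_one hint (fun t ht => ?_) fun t ht => ?_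
        · rw [rpow_zero, mul_one]
          exact rpow_le_rpow_of_nonpos hδ (by nlinarith) (by linarith)
        · have ht0 : 0 < t := (sqrt_pos.2 hδ).trans ht.1
          rw [one_mul, rpow_mul ht0.le, ← rpow_natCast]
          exact rpow_le_rpow_of_nonpos (by positivity) (by norm_num; positivity) (by linarith)
    _ = (1 + 1 / (-2 * γ - 1)) * δ ^ (γ + 1 / 2) := by
        rw [hsqrt, hsqrt, zero_add, div_one, ← rpow_add hδ,
          show γ + 1 / 2 = (2 * γ + 1) / 2 by ring]
        ring

noncomputable def anisotropicKernel (n : ℕ) (α β δ s₁ s₂ t : ℝ) : ℝ :=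
  s₁ ^ α * t ^ (2 * n - 3) /
    ((δ + s₁ + s₂ + t ^ 2) ^ ((2 : ℝ) + β) * (δ + s₁ + s₂ + t) ^ (2 * n - 3))

section anisotropicKernel

variable {n : ℕ} {α β δ s₁ s₂ t : ℝ}

theorem anisotropicKernel_nonneg (hδ : 0 ≤ δ) (hs₁ : 0 ≤ s₁) (hs₂ : 0 ≤ s₂) (ht : 0 ≤ t) :
    0 ≤ anisotropicKernel n α β δ s₁ s₂ t := by
  unfold anisotropicKernel
  positivity

theorem anisotropicKernel_le (hδ : 0 ≤ δ) (hs₁ : 0 ≤ s₁) (hs₂ : 0 ≤ s₂) (ht : 0 ≤ t) :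
    anisotropicKernel n α β δ s₁ s₂ t ≤ s₁ ^ α / (δ + t ^ 2 + s₂ + s₁) ^ ((2 : ℝ) + β) := by
  rw [anisotropicKernel, mul_div_mul_comm, show δ + s₁ + s₂ + t ^ 2 = δ + t ^ 2 + s₂ + s₁ by ring]
  refine mul_le_of_le_one_right (by positivity) (div_le_one_of_le₀ ?_ (by positivity))
  exact pow_le_pow_left₀ ht (by linarith) _

theorem integral_anisotropicKernel_le (hα : -1 < α) (hαβ : α < β + 1) (hδ : 0 < δ)
    (hs₂ : 0 ≤ s₂) (ht : 0 ≤ t) :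
    ∫ s₁ in Ioo 0 1, anisotropicKernel n α β δ s₁ s₂ t ≤
      (1 / (α + 1) + 1 / (β + 1 - α)) * (δ + t ^ 2 + s₂) ^ (α - β - 1) := by
  have ha : 0 < δ + t ^ 2 + s₂ := by positivity
  calc ∫ s₁ in Ioo 0 1, anisotropicKernel n α β δ s₁ s₂ t
      ≤ ∫ s₁ in Ioo 0 1, s₁ ^ α / (δ + t ^ 2 + s₂ + s₁) ^ ((2 : ℝ) + β) :=
        setIntegral_mono_of_nonneg
          (fun s₁ hs₁ => anisotropicKernel_nonneg hδ.le hs₁.1.le hs₂ ht)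
          (fun s₁ hs₁ => anisotropicKernel_le hδ.le hs₁.1.le hs₂ ht)
          (integrableOn_rpow_div_add_rpow hα ha)
    _ ≤ _ := integral_rpow_div_add_rpow_le hα (by linarith) ha
    _ = _ := by ring_nf

theorem integral_integral_anisotropicKernel_le (hα : -1 < α) (hαβ : α < β) (hδ : 0 < δ)
    (ht : 0 ≤ t) :
    ∫ s₂ in Ioo 0 1, ∫ s₁ in Ioo 0 1, anisotropicKernel n α β δ s₁ s₂ t ≤
      (1 / (α + 1) + 1 / (β + 1 - α)) / (β - α) * (δ + t ^ 2) ^ (α - β) := by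
  set K := 1 / (α + 1) + 1 / (β + 1 - α)
  have hK : 0 ≤ K := by
    have : 0 < α + 1 := by linarith
    have : 0 < β + 1 - α := by linarith
    positivity
  have hint : IntegrableOn (fun s₂ => K * (δ + t ^ 2 + s₂) ^ (α - β - 1)) (Ioo 0 1) := by
    refine (ContinuousOn.integrableOn_Icc ?_).mono_set Ioo_subset_Icc_self
    exact continuousOn_const.mul ((continuousOn_const.add continuousOn_id).rpow_const
      fun s₂ hs₂ => .inl (by have := hs₂.1; dsimp; positivity))
  calc ∫ s₂ in Ioo 0 1, ∫ s₁ in Ioo 0 1, anisotropicKernel n α β δ s₁ s₂ t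
      ≤ ∫ s₂ in Ioo 0 1, K * (δ + t ^ 2 + s₂) ^ (α - β - 1) :=
        setIntegral_mono_of_nonneg
          (fun s₂ hs₂ => setIntegral_nonneg measurableSet_Ioo fun s₁ hs₁ =>
            anisotropicKernel_nonneg hδ.le hs₁.1.le hs₂.1.le ht)
          (fun s₂ hs₂ => integral_anisotropicKernel_le hα (by linarith) hδ hs₂.1.le ht) hint
    _ = K * ∫ s₂ in Ioo 0 1, (δ + t ^ 2 + s₂) ^ (α - β - 1) := integral_const_mul _ _
    _ ≤ K * ((δ + t ^ 2) ^ (α - β) / -(α - β)) := by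
        gcongr
        exact integral_add_rpow_le (by linarith) (by positivity)
    _ = K / (β - α) * (δ + t ^ 2) ^ (α - β) := by rw [neg_sub]; ring

end anisotropicKernel

theorem stmt7_general (n : ℕ) (α β : ℝ) (hα : -1 < α)
    (hαβ : α < β - 1 / 2) :
    ∃ C > 0, ∀ δ : ℝ, 0 < δ → δ < 1 / 2 →
      (∫ t in Set.Ioo (0 : ℝ) 1, ∫ s₂ in Set.Ioo (0 : ℝ) 1, ∫ s₁ in Set.Ioo (0 : ℝ) 1,
          s₁ ^ α * t ^ (2 * n - 3) /
            ((δ + s₁ + s₂ + t ^ 2) ^ ((2 : ℝ) + β) * (δ + s₁ + s₂ + t) ^ (2 * n - 3)))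
        ≤ C * δ ^ (α - β + 1 / 2) := by
  set K := (1 / (α + 1) + 1 / (β + 1 - α)) / (β - α)
  have hK : 0 < K := by
    have : 0 < α + 1 := by linarith
    have : 0 < β + 1 - α := by linarith
    have : 0 < β - α := by linarith
    positivity
  have hγ : 0 < -2 * (α - β) - 1 := by linarith
  refine ⟨K * (1 + 1 / (-2 * (α - β) - 1)), by positivity, fun δ hδ hδ1 => ?_⟩
  have hint : IntegrableOn (fun t => K * (δ + t ^ 2) ^ (α - β)) (Ioo 0 1) :=
    (continuous_const.mul ((continuous_const.add (continuous_pow 2)).rpow_const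
      fun t => .inl (add_pos_of_pos_of_nonneg hδ (sq_nonneg t)).ne'))
      |>.integrableOn_Icc.mono_set Ioo_subset_Icc_self
  calc ∫ t in Ioo 0 1, ∫ s₂ in Ioo 0 1, ∫ s₁ in Ioo 0 1, anisotropicKernel n α β δ s₁ s₂ t
      ≤ ∫ t in Ioo 0 1, K * (δ + t ^ 2) ^ (α - β) :=
        setIntegral_mono_of_nonneg
          (fun t ht => setIntegral_nonneg measurableSet_Ioo fun s₂ hs₂ =>
            setIntegral_nonneg measurableSet_Ioo fun s₁ hs₁ =>
              anisotropicKernel_nonneg hδ.le hs₁.1.le hs₂.1.le ht.1.le)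
          (fun t ht => integral_integral_anisotropicKernel_le hα (by linarith) hδ ht.1.le) hint
    _ = K * ∫ t in Ioo 0 1, (δ + t ^ 2) ^ (α - β) := integral_const_mul _ _
    _ ≤ K * ((1 + 1 / (-2 * (α - β) - 1)) * δ ^ (α - β + 1 / 2)) := by
        gcongr
        exact integral_add_sq_rpow_le (by linarith) hδ (by linarith)
    _ = K * (1 + 1 / (-2 * (α - β) - 1)) * δ ^ (α - β + 1 / 2) := by ring

/-- The anisotropic kernel estimate: for `n ≥ 2`, `β ≥ 0`, `-1 < α < β - 1/2`, there is
`C = C(n,α,β)` such that for all `0 < δ < 1/2`,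
`∫∫∫ s₁^α t^{2n-3} / [(δ+s₁+s₂+t²)^{2+β} (δ+s₁+s₂+t)^{2n-3}] ≤ C δ^{α-β+1/2}`. -/
theorem stmt7 (n : ℕ) (hn : 2 ≤ n) (α β : ℝ) (hβ : 0 ≤ β) (hα : -1 < α)
    (hαβ : α < β - 1 / 2) :
    ∃ C > 0, ∀ δ : ℝ, 0 < δ → δ < 1 / 2 →
      (∫ t in Set.Ioo (0 : ℝ) 1, ∫ s₂ in Set.Ioo (0 : ℝ) 1, ∫ s₁ in Set.Ioo (0 : ℝ) 1,
          s₁ ^ α * t ^ (2 * n - 3) /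
            ((δ + s₁ + s₂ + t ^ 2) ^ ((2 : ℝ) + β) * (δ + s₁ + s₂ + t) ^ (2 * n - 3)))
        ≤ C * δ ^ (α - β + 1 / 2) :=
  stmt7_general n α β hα hαβ
end
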